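/- arXiv:2510.12522 — 13 statements merged into one kernel-verified Lean document; each statement's English description precedes it below -/
import Mathlib

section
/- If f : ℝⁿ_{≥0} → ℝⁿ_{≥0} is an m-topical map that is subadditive (f(x+y) ≤ f(x)+f(y) entrywise for all x, y ∈ ℝⁿ_{≥0}), then f is multiplicatively convex: for all x, y ∈ ℝⁿ_{>0} and all 0 < λ < 1, f(x^λ y^{1−λ}) ≤ f(x)^λ f(y)^{1−λ}, where products and powers of vectors are taken entrywise. -/
open Filter Set

/-- Vectors in ℝⁿ indexed by `Fin n`. -/
abbrev Vec (n : ℕ) := Fin n → ℝ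

/-- Entrywise nonnegative vector: an element of ℝⁿ_{≥0}. -/
def Nonneg {n : ℕ} (x : Vec n) : Prop := ∀ i, 0 ≤ x i

/-- Entrywise positive vector: an element of ℝⁿ_{>0}. -/
def Pos {n : ℕ} (x : Vec n) : Prop := ∀ i, 0 < x i

/-- An m-topical map: continuous on ℝⁿ_{≥0}, preserving ℝⁿ_{≥0}, order-preserving,
homogeneous of degree one, and mapping the interior ℝⁿ_{>0} into itself. -/
structure IsMTopical {n : ℕ} (f : Vec n → Vec n) : Prop where
  map_nonneg : ∀ x, Nonneg x → Nonneg (f x)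
  contOn : ContinuousOn f {x : Vec n | Nonneg x}
  mono : ∀ x y, Nonneg x → Nonneg y → x ≤ y → f x ≤ f y
  hom : ∀ c : ℝ, 0 < c → ∀ x, Nonneg x → f (c • x) = c • f x
  map_pos : ∀ x, Pos x → Pos (f x)

/-- The indicator vector `e_J` of a subset `J ⊆ [n]`. -/
noncomputable def eVec {n : ℕ} (J : Set (Fin n)) : Vec n := J.indicator fun _ => 1

/-- The all-ones vector `𝟙`. -/
def allOnes (n : ℕ) : Vec n := fun _ => 1

/-!
Rescale the weighted AM-GM inequality by `a = f(x)ᵢ` and `b = f(y)ᵢ`: entrywise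
`x^λ y^{1-λ} ≤ a^λ b^{1-λ} ((λ/a) x + ((1-λ)/b) y)`. Monotonicity, homogeneity and
subadditivity turn the `i`-th entry of `f` of the right-hand side into at most
`a^λ b^{1-λ} ((λ/a) a + ((1-λ)/b) b) = a^λ b^{1-λ}`.
-/

theorem Real.geom_mean_le_arith_mean2_weighted_rescaled {u v p q l : ℝ} (hu : 0 ≤ u)
    (hv : 0 ≤ v) (hp : 0 < p) (hq : 0 < q) (hl : 0 ≤ l) (hl1 : l ≤ 1) :
    u ^ l * v ^ (1 - l) ≤ p ^ l * q ^ (1 - l) * (l / p * u + (1 - l) / q * v) := by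
  have hpl : 0 < p ^ l := Real.rpow_pos_of_pos hp l
  have hql : 0 < q ^ (1 - l) := Real.rpow_pos_of_pos hq (1 - l)
  calc u ^ l * v ^ (1 - l) = p ^ l * q ^ (1 - l) * ((u / p) ^ l * (v / q) ^ (1 - l)) := by
        rw [Real.div_rpow hu hp.le, Real.div_rpow hv hq.le]
        field_simp
    _ ≤ p ^ l * q ^ (1 - l) * (l * (u / p) + (1 - l) * (v / q)) := by
        gcongr
        exact Real.geom_mean_le_arith_mean2_weighted hl (by linarith)
          (div_nonneg hu hp.le) (div_nonneg hv hq.le) (by ring)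
    _ = p ^ l * q ^ (1 - l) * (l / p * u + (1 - l) / q * v) := by ring

theorem IsMTopical.map_smul_add_smul_le {n : ℕ} {f : Vec n → Vec n} (hf : IsMTopical f)
    (hsub : ∀ x y : Vec n, Nonneg x → Nonneg y → f (x + y) ≤ f x + f y)
    {c d : ℝ} (hc : 0 < c) (hd : 0 < d) {x y : Vec n} (hx : Nonneg x) (hy : Nonneg y) :
    f (c • x + d • y) ≤ c • f x + d • f y := by
  have hcx : Nonneg (c • x) := fun j => mul_nonneg hc.le (hx j)
  have hdy : Nonneg (d • y) := fun j => mul_nonneg hd.le (hy j)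
  simpa only [hf.hom c hc x hx, hf.hom d hd y hy] using hsub _ _ hcx hdy

theorem subadditive_mTopical_mConvex_general {n : ℕ} (f : Vec n → Vec n)
    (hf : IsMTopical f)
    (hsub : ∀ x y : Vec n, Nonneg x → Nonneg y → f (x + y) ≤ f x + f y) :
    ∀ x y : Vec n, Pos x → Pos y → ∀ l : ℝ, 0 < l → l < 1 →
      ∀ i, f (fun j => x j ^ l * y j ^ (1 - l)) i ≤ f x i ^ l * f y i ^ (1 - l) := by
  intro x y hx hy l hl hl1 i
  have ha : 0 < f x i := hf.map_pos x hx i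
  have hb : 0 < f y i := hf.map_pos y hy i
  have hl' : 0 < 1 - l := sub_pos.mpr hl1
  have hx0 : Nonneg x := fun j => (hx j).le
  have hy0 : Nonneg y := fun j => (hy j).le
  set s := f x i ^ l * f y i ^ (1 - l)
  set w : Vec n := (l / f x i) • x + ((1 - l) / f y i) • y
  have hz0 : Nonneg fun j => x j ^ l * y j ^ (1 - l) := fun j =>
    mul_nonneg (Real.rpow_nonneg (hx0 j) _) (Real.rpow_nonneg (hy0 j) _)
  have hw : Nonneg w := fun j =>
    add_nonneg (mul_nonneg (by positivity) (hx0 j)) (mul_nonneg (by positivity) (hy0 j))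
  have hz : (fun j => x j ^ l * y j ^ (1 - l)) ≤ s • w := fun j =>
    Real.geom_mean_le_arith_mean2_weighted_rescaled (hx0 j) (hy0 j) ha hb hl.le hl1.le
  have hfw : f w i ≤ 1 :=
    calc f w i ≤ l / f x i * f x i + (1 - l) / f y i * f y i :=
          hf.map_smul_add_smul_le hsub (div_pos hl ha) (div_pos hl' hb) hx0 hy0 i
      _ = 1 := by field_simp; ring
  calc f (fun j => x j ^ l * y j ^ (1 - l)) i ≤ f (s • w) i :=
        hf.mono _ _ hz0 (fun j => mul_nonneg (by positivity) (hw j)) hz i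
    _ = s * f w i := by rw [hf.hom s (by positivity) w hw]; rfl
    _ ≤ s := mul_le_of_le_one_right (by positivity) hfw

/-- Subadditive m-topical maps are multiplicatively convex. -/
theorem subadditive_mTopical_mConvex {n : ℕ} (hn : 0 < n) (f : Vec n → Vec n)
    (hf : IsMTopical f)
    (hsub : ∀ x y : Vec n, Nonneg x → Nonneg y → f (x + y) ≤ f x + f y) :
    ∀ x y : Vec n, Pos x → Pos y → ∀ l : ℝ, 0 < l → l < 1 →
      ∀ i, f (fun j => x j ^ l * y j ^ (1 - l)) i ≤ f x i ^ l * f y i ^ (1 - l) :=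
  subadditive_mTopical_mConvex_general f hf hsub
end

section
/- If an m-topical map f : ℝⁿ_{≥0} → ℝⁿ_{≥0} is facially irreducible, then f is indecomposable. -/
open Filter Set

/-- The face `F_J` of the standard cone. -/
def Face {n : ℕ} (J : Set (Fin n)) : Set (Vec n) :=
  {x | Nonneg x ∧ ∀ i ∉ J, x i = 0}

/-- `f` leaves no nontrivial proper face of the standard cone invariant. -/
def FaciallyIrreducible {n : ℕ} (f : Vec n → Vec n) : Prop :=
  ¬ ∃ J : Set (Fin n), J.Nonempty ∧ J ≠ univ ∧ ∀ x ∈ Face J, f x ∈ Face J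

/-- `f` is indecomposable: there is no nonempty proper `J` such that for every `i ∉ J`
the function `t ↦ f(𝟙 + t e_J)_i` is bounded as `t → ∞`. -/
def Indecomposable {n : ℕ} (f : Vec n → Vec n) : Prop :=
  ¬ ∃ J : Set (Fin n), J.Nonempty ∧ J ≠ univ ∧
      ∀ i ∉ J, ∃ C : ℝ, ∀ᶠ t : ℝ in atTop, f (allOnes n + t • eVec J) i ≤ C

/-- Facial irreducibility implies indecomposability. -/
theorem faciallyIrreducible_indecomposable {n : ℕ} (hn : 0 < n) (f : Vec n → Vec n)
    (hf : IsMTopical f) (hirr : FaciallyIrreducible f) : Indecomposable f := by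
  rintro ⟨J, hJne, hJuniv, hbd⟩
  have heN : Nonneg (eVec J) := by
    intro i
    unfold eVec
    by_cases hi : i ∈ J
    · simp [Set.indicator_of_mem hi]
    · simp [Set.indicator_of_notMem hi]
  have hone : Nonneg (allOnes n) := fun i => by norm_num [allOnes]
  -- key: f (eVec J) i = 0 for i ∉ J
  have key : ∀ i ∉ J, f (eVec J) i = 0 := by
    intro i hi
    obtain ⟨C, hC⟩ := hbd i hi
    have hnn : 0 ≤ f (eVec J) i := hf.map_nonneg _ heN i
    by_contra h0
    have hpos : 0 < f (eVec J) i := lt_of_le_of_ne hnn (Ne.symm h0)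
    have hev : ∀ᶠ t : ℝ in atTop,
        f (allOnes n + t • eVec J) i ≤ C ∧ C / f (eVec J) i < t ∧ 0 < t :=
      hC.and ((eventually_gt_atTop _).and (eventually_gt_atTop 0))
    obtain ⟨t, ht1, ht2, ht3⟩ := hev.exists
    have hNs : Nonneg (t • eVec J) := fun j => mul_nonneg ht3.le (heN j)
    have hNs' : Nonneg (allOnes n + t • eVec J) := fun j =>
      add_nonneg (hone j) (hNs j)
    have hle : t • eVec J ≤ allOnes n + t • eVec J := fun j =>
      le_add_of_nonneg_left (hone j)
    have hmono := hf.mono _ _ hNs hNs' hle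
    have hhom := hf.hom t ht3 _ heN
    have : t * f (eVec J) i ≤ C := by
      have := hmono i
      rw [hhom] at this
      exact le_trans this ht1
    have : C < t * f (eVec J) i := by
      rw [div_lt_iff₀ hpos] at ht2
      linarith [ht2]
    linarith
  -- face invariance
  apply hirr
  refine ⟨J, hJne, hJuniv, ?_⟩
  rintro x ⟨hxN, hxJ⟩
  refine ⟨hf.map_nonneg _ hxN, ?_⟩
  intro i hi
  set M : ℝ := 1 + ∑ j, x j with hM
  have hsum : 0 ≤ ∑ j, x j := Finset.sum_nonneg fun j _ => hxN j
  have hMpos : 0 < M := by positivity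
  have hxle : x ≤ M • eVec J := by
    intro j
    by_cases hj : j ∈ J
    · have : x j ≤ ∑ k, x k :=
        Finset.single_le_sum (fun k _ => hxN k) (Finset.mem_univ j)
      simp only [Pi.smul_apply, smul_eq_mul, eVec, Set.indicator_of_mem hj]
      linarith
    · simp only [Pi.smul_apply, smul_eq_mul, eVec, Set.indicator_of_notMem hj,
        hxJ j hj, mul_zero]
      exact le_refl 0
  have hNs : Nonneg (M • eVec J) := fun j => mul_nonneg hMpos.le (heN j)
  have hmono := hf.mono _ _ hxN hNs hxle i
  rw [hf.hom M hMpos _ heN] at hmono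
  have : f x i ≤ M * f (eVec J) i := hmono
  rw [key i hi, mul_zero] at this
  exact le_antisymm this (hf.map_nonneg _ hxN i)
end

section
/- If an m-topical map f : ℝⁿ_{≥0} → ℝⁿ_{≥0} is graphically irreducible, then f is indecomposable. -/
open Filter Set

/-- Arc of the graph `G(f)`: from `i` to `j` whenever `f(𝟙 + t e_{j})_i → ∞`. -/
def Arc {n : ℕ} (f : Vec n → Vec n) (i j : Fin n) : Prop :=
  Tendsto (fun t : ℝ => f (allOnes n + t • eVec {j}) i) atTop atTop

/-- `f` is graphically irreducible: `G(f)` is strongly connected. -/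
def GraphicallyIrreducible {n : ℕ} (f : Vec n → Vec n) : Prop :=
  ∀ i j : Fin n, Relation.ReflTransGen (Arc f) i j

lemma crossing {α : Type*} (r : α → α → Prop) (P : α → Prop) (i j : α)
    (h : Relation.ReflTransGen r i j) (hi : ¬ P i) (hj : P j) :
    ∃ a b, r a b ∧ ¬ P a ∧ P b := by
  induction h with
  | refl => exact absurd hj hi
  | @tail c d hic hcd ih =>
    by_cases hc : P c
    · exact ih hc
    · exact ⟨c, d, hcd, hc, hj⟩

lemma nn {n : ℕ} (t : ℝ) (ht : 0 ≤ t) (J : Set (Fin n)) :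
    Nonneg (allOnes n + t • eVec J) := by
  intro k
  have : 0 ≤ eVec J k := Set.indicator_nonneg (fun _ _ => zero_le_one) k
  simp only [Pi.add_apply, Pi.smul_apply, smul_eq_mul, allOnes]
  nlinarith

/-- Graphical irreducibility implies indecomposability. -/
theorem graphicallyIrreducible_indecomposable {n : ℕ} (hn : 0 < n) (f : Vec n → Vec n)
    (hf : IsMTopical f) (hirr : GraphicallyIrreducible f) : Indecomposable f := by
  rintro ⟨J, ⟨j0, hj0⟩, hJne, hbd⟩
  -- pick i0 ∉ J
  obtain ⟨i0, hi0⟩ : ∃ i, i ∉ J := by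
    by_contra h
    push_neg at h
    exact hJne (Set.eq_univ_iff_forall.2 h)
  -- find a crossing arc a ∉ J, b ∈ J
  obtain ⟨a, b, hab, haJ, hbJ⟩ :
      ∃ a b, Arc f a b ∧ a ∉ J ∧ b ∈ J :=
    crossing (Arc f) (· ∈ J) i0 j0 (hirr i0 j0) hi0 hj0
  obtain ⟨C, hC⟩ := hbd a haJ
  -- monotonicity: f(𝟙 + t e_{b}) ≤ f(𝟙 + t e_J) for t ≥ 0
  have key : ∀ᶠ t : ℝ in atTop, f (allOnes n + t • eVec {b}) a ≤ C := by
    filter_upwards [hC, eventually_ge_atTop (0 : ℝ)] with t ht ht0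
    refine le_trans ?_ ht
    have hle : (allOnes n + t • eVec {b}) ≤ (allOnes n + t • eVec J) := by
      intro k
      simp only [Pi.add_apply, Pi.smul_apply, smul_eq_mul]
      have : eVec {b} k ≤ eVec J k := by
        unfold eVec
        exact Set.indicator_le_indicator_of_subset
          (Set.singleton_subset_iff.2 hbJ) (fun _ => zero_le_one) k
      nlinarith [this]
    have h1 : Nonneg (allOnes n + t • eVec {b}) := nn t ht0 {b}
    have h2 : Nonneg (allOnes n + t • eVec J) := nn t ht0 J
    exact hf.mono _ _ h1 h2 hle a
  obtain ⟨t, ht1, ht2⟩ := ((hab.eventually (eventually_gt_atTop C)).and key).exists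
  exact absurd ht2 (not_le.2 ht1)
end

section
/- If an m-topical map f : ℝⁿ_{≥0} → ℝⁿ_{≥0} is multiplicatively convex and indecomposable, then f is graphically irreducible. -/
open Filter Set

/-- `f` is multiplicatively convex. -/
def MConvex {n : ℕ} (f : Vec n → Vec n) : Prop :=
  ∀ x y : Vec n, Pos x → Pos y → ∀ l : ℝ, 0 < l → l < 1 →
    ∀ i, f (fun j => x j ^ l * y j ^ (1 - l)) i ≤ f x i ^ l * f y i ^ (1 - l)

/-!
Fix `i` and let `R` be the set of vertices reachable from `i` in `G(f)`. For `m ∈ R` there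
is no arc from `m` into `Rᶜ`, so `f(𝟙 + t e_{k}) m` stays bounded for each `k ∉ R`. Multiplicative
convexity at `λ = 1/2` propagates boundedness from `e_J` and `e_K` to `e_{J ∪ K}` for disjoint
`J`, `K`, because `𝟙 + t e_{J ∪ K}` is the entrywise geometric mean of `𝟙 + (t² + 2t) e_J` and
`𝟙 + (t² + 2t) e_K`. Hence `f(𝟙 + t e_{Rᶜ}) m` is bounded for every `m ∈ R`, and
indecomposability forces `Rᶜ = ∅`.
-/

namespace MTopical

variable {n : ℕ}

open Classical in
/-- `𝟙 + (r - 1) e_J`: the ray `𝟙 + t e_J` parametrized by `r = 1 + t`. -/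
noncomputable def scaleOn (J : Set (Fin n)) (r : ℝ) : Vec n := fun j => if j ∈ J then r else 1

theorem allOnes_add_smul_eVec (J : Set (Fin n)) (t : ℝ) :
    allOnes n + t • eVec J = scaleOn J (1 + t) := by
  funext j
  by_cases hj : j ∈ J <;> simp [scaleOn, eVec, allOnes, hj]

theorem scaleOn_empty (r : ℝ) : scaleOn (∅ : Set (Fin n)) r = allOnes n := by
  funext j
  simp [scaleOn, allOnes]

theorem scaleOn_pos {J : Set (Fin n)} {r : ℝ} (hr : 0 < r) : Pos (scaleOn J r) := by
  intro j
  by_cases hj : j ∈ J <;> simp [scaleOn, hj, hr]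

theorem scaleOn_mono {J : Set (Fin n)} {r r' : ℝ} (hrr' : r ≤ r') :
    scaleOn J r ≤ scaleOn J r' := by
  intro j
  by_cases hj : j ∈ J <;> simp [scaleOn, hj, hrr']

theorem sqrt_scaleOn_mul_sqrt_scaleOn {J K : Set (Fin n)} (hJK : Disjoint J K) {r : ℝ}
    (hr : 0 ≤ r) (j : Fin n) :
    √(scaleOn J (r ^ 2) j) * √(scaleOn K (r ^ 2) j) = scaleOn (J ∪ K) r j := by
  by_cases hJ : j ∈ J
  · have hK : j ∉ K := hJK.notMem_of_mem_left hJ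
    simp [scaleOn, hJ, hK, Real.sqrt_sq hr]
  · by_cases hK : j ∈ K <;> simp [scaleOn, hJ, hK, Real.sqrt_sq hr]

theorem MConvex.apply_sqrt_mul_sqrt_le {f : Vec n → Vec n} (hf : MConvex f) {x y : Vec n}
    (hx : Pos x) (hy : Pos y) (i : Fin n) :
    f (fun j => √(x j) * √(y j)) i ≤ √(f x i) * √(f y i) := by
  have h := hf x y hx hy (1 / 2) (by norm_num) (by norm_num) i
  rw [show (1 : ℝ) - 1 / 2 = 1 / 2 by norm_num] at h
  simpa only [Real.sqrt_eq_rpow] using h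

def BddOnRay (f : Vec n → Vec n) (J : Set (Fin n)) (i : Fin n) : Prop :=
  ∃ C : ℝ, ∀ r, 1 ≤ r → f (scaleOn J r) i ≤ C

variable {f : Vec n → Vec n}

theorem apply_scaleOn_mono (hf : IsMTopical f) {J : Set (Fin n)} {i : Fin n} {r r' : ℝ}
    (hr : 1 ≤ r) (hrr' : r ≤ r') : f (scaleOn J r) i ≤ f (scaleOn J r') i :=
  hf.mono _ _ (fun k => (scaleOn_pos (by linarith) k).le)
    (fun k => (scaleOn_pos (by linarith) k).le) (scaleOn_mono hrr') i

theorem bddOnRay_empty (i : Fin n) : BddOnRay f ∅ i :=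
  ⟨f (allOnes n) i, fun r _ => by rw [scaleOn_empty]⟩

theorem bddOnRay_singleton_of_not_arc (hf : IsMTopical f) {i j : Fin n} (h : ¬ Arc f i j) :
    BddOnRay f {j} i := by
  by_contra hunbdd
  refine h (tendsto_atTop_atTop.2 fun C => ?_)
  simp only [BddOnRay] at hunbdd
  push Not at hunbdd
  obtain ⟨r, hr, hCr⟩ := hunbdd C
  refine ⟨r - 1, fun t ht => hCr.le.trans ?_⟩
  rw [allOnes_add_smul_eVec]
  exact apply_scaleOn_mono hf hr (by linarith)

theorem BddOnRay.union (hconv : MConvex f) {J K : Set (Fin n)} (hJK : Disjoint J K)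
    {i : Fin n} (hJ : BddOnRay f J i) (hK : BddOnRay f K i) : BddOnRay f (J ∪ K) i := by
  obtain ⟨CJ, hCJ⟩ := hJ
  obtain ⟨CK, hCK⟩ := hK
  refine ⟨√CJ * √CK, fun r hr => ?_⟩
  have hr2 : 1 ≤ r ^ 2 := one_le_pow₀ hr
  have hpos : 0 < r ^ 2 := by positivity
  calc f (scaleOn (J ∪ K) r) i
      = f (fun j => √(scaleOn J (r ^ 2) j) * √(scaleOn K (r ^ 2) j)) i := by
        simp only [sqrt_scaleOn_mul_sqrt_scaleOn hJK (by linarith)]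
    _ ≤ √(f (scaleOn J (r ^ 2)) i) * √(f (scaleOn K (r ^ 2)) i) :=
        MConvex.apply_sqrt_mul_sqrt_le hconv (scaleOn_pos hpos) (scaleOn_pos hpos) i
    _ ≤ √CJ * √CK :=
        mul_le_mul (Real.sqrt_le_sqrt (hCJ _ hr2)) (Real.sqrt_le_sqrt (hCK _ hr2))
          (Real.sqrt_nonneg _) (Real.sqrt_nonneg _)

theorem bddOnRay_of_forall_not_arc (hf : IsMTopical f) (hconv : MConvex f) {i : Fin n}
    (S : Set (Fin n)) (h : ∀ j ∈ S, ¬ Arc f i j) : BddOnRay f S i := by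
  induction S, S.toFinite using Set.Finite.induction_on with
  | empty => exact bddOnRay_empty i
  | @insert j S hjS _ ih =>
    rw [Set.insert_eq]
    exact (bddOnRay_singleton_of_not_arc hf (h j (Set.mem_insert j S))).union hconv
      (Set.disjoint_singleton_left.2 hjS) (ih fun k hk => h k (Set.mem_insert_of_mem j hk))

theorem BddOnRay.eventually_le {J : Set (Fin n)} {i : Fin n} (h : BddOnRay f J i) :
    ∃ C : ℝ, ∀ᶠ t : ℝ in atTop, f (allOnes n + t • eVec J) i ≤ C := by
  obtain ⟨C, hC⟩ := h
  refine ⟨C, (eventually_ge_atTop 0).mono fun t ht => ?_⟩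
  rw [allOnes_add_smul_eVec]
  exact hC _ (by linarith)

end MTopical

theorem mConvex_indecomposable_graphicallyIrreducible_general {n : ℕ}
    (f : Vec n → Vec n) (hf : IsMTopical f) (hconv : MConvex f)
    (hind : Indecomposable f) : GraphicallyIrreducible f := by
  intro i j
  by_contra hij
  set R := {k | Relation.ReflTransGen (Arc f) i k}
  refine hind ⟨Rᶜ, ⟨j, hij⟩,
    (ne_univ_iff_exists_notMem _).2 ⟨i, not_not.2 .refl⟩, fun m hm => ?_⟩
  have hmR : m ∈ R := not_not.1 hm
  exact (MTopical.bddOnRay_of_forall_not_arc hf hconv Rᶜ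
    fun k hk hmk => hk (hmR.tail hmk)).eventually_le

/-- An m-convex indecomposable m-topical map is graphically irreducible. -/
theorem mConvex_indecomposable_graphicallyIrreducible {n : ℕ} (hn : 0 < n)
    (f : Vec n → Vec n) (hf : IsMTopical f) (hconv : MConvex f)
    (hind : Indecomposable f) : GraphicallyIrreducible f :=
  mConvex_indecomposable_graphicallyIrreducible_general f hf hconv hind
end

section
/- If an m-topical map f : ℝⁿ_{≥0} → ℝⁿ_{≥0} is subadditive (f(x+y) ≤ f(x)+f(y) entrywise for all x, y ∈ ℝⁿ_{≥0}) and indecomposable, then f is facially irreducible. -/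
open Filter Set

/-- A subadditive indecomposable m-topical map is facially irreducible. -/
theorem subadditive_indecomposable_faciallyIrreducible {n : ℕ} (hn : 0 < n)
    (f : Vec n → Vec n) (hf : IsMTopical f)
    (hsub : ∀ x y : Vec n, Nonneg x → Nonneg y → f (x + y) ≤ f x + f y)
    (hind : Indecomposable f) : FaciallyIrreducible f := by
  rintro ⟨J, hJne, hJuniv, hface⟩
  apply hind
  refine ⟨J, hJne, hJuniv, fun i hi => ?_⟩
  have heJ : Nonneg (eVec J) := fun j => Set.indicator_apply_nonneg (fun _ => zero_le_one)
  have heJF : eVec J ∈ Face J := ⟨heJ, fun j hj => Set.indicator_of_notMem hj _⟩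
  have hfeJ : f (eVec J) i = 0 := (hface _ heJF).2 i hi
  refine ⟨f (allOnes n) i, ?_⟩
  filter_upwards [eventually_gt_atTop 0] with t ht
  have h1 : Nonneg (allOnes n) := fun j => zero_le_one
  have hte : Nonneg (t • eVec J) := fun j => mul_nonneg ht.le (heJ j)
  have h2 := hsub (allOnes n) (t • eVec J) h1 hte
  have h3 : f (t • eVec J) = t • f (eVec J) := hf.hom t ht _ heJ
  have := h2 i
  rw [Pi.add_apply, h3, Pi.smul_apply, hfeJ, smul_eq_mul, mul_zero, add_zero] at this
  exact this
end

section
/- If an m-topical map f : ℝⁿ_{≥0} → ℝⁿ_{≥0} is imperturbable, then for all real 0 < α ≤ β the slice space S_α^β(f) = {x ∈ ℝⁿ_{>0} : αx ≤ f(x) ≤ βx} is bounded in Hilbert's projective metric; that is, there exists a constant C such that for all x, y ∈ S_α^β(f) there exist reals 0 < a ≤ b with a·x ≤ y ≤ b·x (entrywise) and log(b/a) ≤ C. -/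
open Filter Set
open scoped ENNReal Topology

/-- `f` is imperturbable: there are no nonempty `I ⊆ J ⊊ [n]` with `f(e_I)_i > 0` for all
`i ∈ I` and `t ↦ f(𝟙 + t e_J)_i` bounded as `t → ∞` for all `i ∉ J`. -/
def Imperturbable {n : ℕ} (f : Vec n → Vec n) : Prop :=
  ¬ ∃ I J : Set (Fin n), I.Nonempty ∧ I ⊆ J ∧ J ≠ univ ∧
      (∀ i ∈ I, 0 < f (eVec I) i) ∧
      ∀ i ∉ J, ∃ C : ℝ, ∀ᶠ t : ℝ in atTop, f (allOnes n + t • eVec J) i ≤ C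

/-- The slice space `S_α^β(f)`. -/
def SliceSpace {n : ℕ} (f : Vec n → Vec n) (α β : ℝ) : Set (Vec n) :=
  {x | Pos x ∧ ∀ i, α * x i ≤ f x i ∧ f x i ≤ β * x i}

lemma sliceSpace_smul {n : ℕ} {f : Vec n → Vec n} (hf : IsMTopical f) {α β : ℝ}
    {x : Vec n} (hx : x ∈ SliceSpace f α β) {c : ℝ} (hc : 0 < c) :
    c • x ∈ SliceSpace f α β := by
  obtain ⟨hp, hi⟩ := hx
  have hnn : Nonneg x := fun i => (hp i).le
  refine ⟨fun i => mul_pos hc (hp i), fun i => ?_⟩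
  rw [hf.hom c hc x hnn]
  simp only [Pi.smul_apply, smul_eq_mul]
  constructor
  · calc α * (c * x i) = c * (α * x i) := by ring
      _ ≤ c * f x i := mul_le_mul_of_nonneg_left (hi i).1 hc.le
  · calc c * f x i ≤ c * (β * x i) := mul_le_mul_of_nonneg_left (hi i).2 hc.le
      _ = β * (c * x i) := by ring

lemma key {n : ℕ} (hn : 0 < n) (f : Vec n → Vec n) (hf : IsMTopical f)
    (himp : Imperturbable f) {α β : ℝ} (hα : 0 < α) (hαβ : α ≤ β) :
    ∃ δ : ℝ, 0 < δ ∧ δ ≤ 1 ∧ ∀ x ∈ SliceSpace f α β, ∀ i j, δ * x i ≤ x j := by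
  haveI : Nonempty (Fin n) := Fin.pos_iff_nonempty.mp hn
  have hu : (Finset.univ : Finset (Fin n)).Nonempty := Finset.univ_nonempty
  by_contra hcon
  push_neg at hcon
  have hseq : ∀ k : ℕ, ∃ x : Vec n, x ∈ SliceSpace f α β ∧ (∀ i, x i ≤ 1) ∧
      1 ≤ ∑ i, x i ∧ ∃ j, x j < 1/(k+1) := by
    intro k
    have hk0 : (0:ℝ) < 1/(k+1) := by positivity
    have hk1 : (1:ℝ)/(k+1) ≤ 1 := by
      rw [div_le_one (by positivity)]
      have : (0:ℝ) ≤ (k:ℝ) := Nat.cast_nonneg k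
      linarith
    obtain ⟨z, hz, i, j, hij⟩ := hcon (1/(k+1)) hk0 hk1
    set M := Finset.univ.sup' hu z with hM
    obtain ⟨i0, -, hi0⟩ := Finset.exists_mem_eq_sup' hu z
    have hM0 : 0 < M := by rw [hM, hi0]; exact hz.1 i0
    have hle : ∀ i, z i ≤ M := fun i => Finset.le_sup' z (Finset.mem_univ i)
    refine ⟨M⁻¹ • z, sliceSpace_smul hf hz (inv_pos.2 hM0), fun i => ?_, ?_, ⟨j, ?_⟩⟩
    · have h1 : M⁻¹ * z i ≤ M⁻¹ * M := mul_le_mul_of_nonneg_left (hle i) (inv_pos.2 hM0).le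
      simpa [inv_mul_cancel₀ hM0.ne'] using h1
    · have h1 : M⁻¹ * z i0 ≤ ∑ i, M⁻¹ * z i := by
        apply Finset.single_le_sum (f := fun i => M⁻¹ * z i)
          (fun i _ => mul_nonneg (inv_pos.2 hM0).le (hz.1 i).le) (Finset.mem_univ i0)
      have h2 : M⁻¹ * z i0 = 1 := by rw [← hi0, inv_mul_cancel₀ hM0.ne']
      simpa [h2] using h1
    · have h1 : M⁻¹ * z j < M⁻¹ * (1/(k+1) * z i) :=
        mul_lt_mul_of_pos_left hij (inv_pos.2 hM0)
      have h2 : M⁻¹ * z i ≤ 1 := by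
        have := mul_le_mul_of_nonneg_left (hle i) (inv_pos.2 hM0).le
        simpa [inv_mul_cancel₀ hM0.ne'] using this
      have : M⁻¹ * (1/(k+1) * z i) = 1/(k+1) * (M⁻¹ * z i) := by ring
      rw [this] at h1
      calc (M⁻¹ • z) j = M⁻¹ * z j := rfl
        _ < 1/(k+1) * (M⁻¹ * z i) := h1
        _ ≤ 1/(k+1) * 1 := mul_le_mul_of_nonneg_left h2 hk0.le
        _ = 1/(k+1) := mul_one _
  choose x hxS hxle hxsum hxsmall using hseq
  set μ : ℕ → ℝ := fun k => Finset.univ.inf' hu (x k) with hμdef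
  have hμle : ∀ k i, μ k ≤ x k i := fun k i => Finset.inf'_le _ (Finset.mem_univ i)
  have hμmem : ∀ k, ∃ m, μ k = x k m := by
    intro k
    obtain ⟨m, -, hm⟩ := Finset.exists_mem_eq_inf' hu (x k)
    exact ⟨m, hm⟩
  have hμpos : ∀ k, 0 < μ k := by
    intro k
    obtain ⟨m, hm⟩ := hμmem k
    rw [hm]; exact (hxS k).1 m
  have hμsmall : ∀ k, μ k < 1/(k+1) := by
    intro k
    obtain ⟨j, hj⟩ := hxsmall k
    exact lt_of_le_of_lt (hμle k j) hj
  set r : ℕ → Fin n → ℝ := fun k i => x k i / μ k with hrdef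
  have hr1 : ∀ k i, 1 ≤ r k i := fun k i => (one_le_div (hμpos k)).2 (hμle k i)
  set g : ℕ → ((Fin n → ℝ≥0∞) × (Fin n → ℝ≥0∞)) := fun k =>
    (fun i => ENNReal.ofReal (x k i), fun i => ENNReal.ofReal (r k i)) with hgdef
  obtain ⟨L, -, φ, hφ, hgt⟩ := isCompact_univ.tendsto_subseq (x := g) (fun k => mem_univ _)
  have hξt : ∀ i, Tendsto (fun k => ENNReal.ofReal (x (φ k) i)) atTop (𝓝 (L.1 i)) := by
    intro i
    exact ((continuous_apply i).tendsto L.1).comp ((continuous_fst.tendsto L).comp hgt)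
  have hρt : ∀ i, Tendsto (fun k => ENNReal.ofReal (r (φ k) i)) atTop (𝓝 (L.2 i)) := by
    intro i
    exact ((continuous_apply i).tendsto L.2).comp ((continuous_snd.tendsto L).comp hgt)
  have hξtop : ∀ i, L.1 i ≠ ⊤ := by
    intro i
    have hle1 : L.1 i ≤ 1 := le_of_tendsto (hξt i)
      (Eventually.of_forall fun k => ENNReal.ofReal_le_one.2 (hxle _ i))
    exact ne_top_of_le_ne_top ENNReal.one_ne_top hle1
  set xb : Vec n := fun i => (L.1 i).toReal with hxbdef
  have hxbt : ∀ i, Tendsto (fun k => x (φ k) i) atTop (𝓝 (xb i)) := by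
    intro i
    have := (ENNReal.tendsto_toReal (hξtop i)).comp (hξt i)
    exact this.congr fun k => ENNReal.toReal_ofReal ((hxS (φ k)).1 i).le
  have hxbnn : Nonneg xb := fun i => ENNReal.toReal_nonneg
  have hxble : ∀ i, xb i ≤ 1 := fun i =>
    le_of_tendsto (hxbt i) (Eventually.of_forall fun k => hxle _ i)
  have hxbsum : 1 ≤ ∑ i, xb i := by
    have hsumt : Tendsto (fun k => ∑ i, x (φ k) i) atTop (𝓝 (∑ i, xb i)) :=
      tendsto_finset_sum _ (fun i _ => hxbt i)
    exact ge_of_tendsto hsumt (Eventually.of_forall fun k => hxsum _)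
  set I : Set (Fin n) := {i | 0 < xb i} with hIdef
  have hIne : I.Nonempty := by
    by_contra h
    push_neg at h
    have h0 : ∀ i, xb i = 0 := by
      intro i
      have hni : i ∉ I := by rw [h]; exact notMem_empty i
      exact le_antisymm (not_lt.1 hni) (hxbnn i)
    rw [Finset.sum_congr rfl (fun i _ => h0 i)] at hxbsum
    simp only [Finset.sum_const_zero] at hxbsum
    linarith
  have hμt : Tendsto (fun k => μ (φ k)) atTop (𝓝 0) := by
    have hup : ∀ k : ℕ, μ (φ k) ≤ 1/(k+1) := by
      intro k
      refine le_trans (hμsmall (φ k)).le (one_div_le_one_div_of_le (by positivity) ?_)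
      have : (k:ℝ) ≤ (φ k : ℝ) := Nat.cast_le.2 hφ.le_apply
      linarith
    exact tendsto_of_tendsto_of_tendsto_of_le_of_le tendsto_const_nhds
      tendsto_one_div_add_atTop_nhds_zero_nat (fun k => (hμpos _).le) hup
  have hfxt : Tendsto (fun k => f (x (φ k))) atTop (𝓝 (f xb)) := by
    have hmem : ∀ k : ℕ, x (φ k) ∈ {v : Vec n | Nonneg v} := fun k i => ((hxS (φ k)).1 i).le
    have h1 : Tendsto (fun k => x (φ k)) atTop (𝓝[{v : Vec n | Nonneg v}] xb) :=
      tendsto_nhdsWithin_iff.2 ⟨tendsto_pi_nhds.2 hxbt, Eventually.of_forall hmem⟩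
    exact (hf.contOn xb hxbnn).tendsto.comp h1
  have hfxb : ∀ i, α * xb i ≤ f xb i := by
    intro i
    have h1 : Tendsto (fun k => f (x (φ k)) i) atTop (𝓝 (f xb i)) :=
      ((continuous_apply i).tendsto _).comp hfxt
    have h2 : Tendsto (fun k => α * x (φ k) i) atTop (𝓝 (α * xb i)) := (hxbt i).const_mul α
    exact le_of_tendsto_of_tendsto h2 h1 (Eventually.of_forall fun k => ((hxS (φ k)).2 i).1)
  have heI : ∀ i ∈ I, 0 < f (eVec I) i := by
    intro i hi
    have hIe_nn : Nonneg (eVec I) := fun j => Set.indicator_nonneg (fun _ _ => zero_le_one) j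
    have hle : xb ≤ eVec I := by
      intro j
      by_cases hj : j ∈ I
      · simpa [eVec, Set.indicator_of_mem hj] using hxble j
      · have hj0 : xb j = 0 := le_antisymm (not_lt.1 hj) (hxbnn j)
        simp [eVec, Set.indicator_of_notMem hj, hj0]
    have hm := hf.mono xb (eVec I) hxbnn hIe_nn hle i
    have h0 : 0 < α * xb i := mul_pos hα hi
    linarith [hfxb i]
  set J : Set (Fin n) := {i | L.2 i = ⊤} with hJdef
  have hrbound : ∀ i, L.2 i ≠ ⊤ → ∀ᶠ k in atTop, r (φ k) i < (L.2 i).toReal + 1 := by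
    intro i hne
    have hlt : L.2 i < L.2 i + 1 := ENNReal.lt_add_right hne one_ne_zero
    have hev : ∀ᶠ k in atTop, ENNReal.ofReal (r (φ k) i) < L.2 i + 1 :=
      (hρt i).eventually (Filter.Tendsto.eventually_lt_const hlt tendsto_id)
    filter_upwards [hev] with k hk
    have hne' : L.2 i + 1 ≠ ⊤ := by
      simp [ENNReal.add_eq_top, hne]
    have := (ENNReal.ofReal_lt_iff_lt_toReal (le_trans zero_le_one (hr1 (φ k) i)) hne').1 hk
    rwa [ENNReal.toReal_add hne ENNReal.one_ne_top, ENNReal.toReal_one] at this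
  have hIJ : I ⊆ J := by
    intro i hi
    by_contra hne
    have hB := hrbound i hne
    set B : ℝ := (L.2 i).toReal + 1 with hBdef
    have hev : ∀ᶠ k in atTop, x (φ k) i ≤ B * μ (φ k) := by
      filter_upwards [hB] with k hk
      have := (div_lt_iff₀ (hμpos (φ k))).1 hk
      nlinarith
    have hBμ : Tendsto (fun k => B * μ (φ k)) atTop (𝓝 0) := by
      have := hμt.const_mul B
      simpa using this
    have : xb i ≤ 0 := le_of_tendsto_of_tendsto (hxbt i) hBμ hev
    exact absurd hi (by simp [hIdef]; linarith)
  have hJne : J ≠ univ := by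
    intro hJu
    have hall : ∀ᶠ k in atTop, ∀ i, 1 < r (φ k) i := by
      rw [eventually_all]
      intro i
      have hi : L.2 i = ⊤ := by
        have : i ∈ J := by rw [hJu]; exact mem_univ i
        exact this
      have hev : ∀ᶠ k in atTop, (1:ℝ≥0∞) < ENNReal.ofReal (r (φ k) i) := by
        have hT := hρt i
        rw [hi] at hT
        exact hT.eventually (eventually_mem_set.mpr (Ioi_mem_nhds (by simp)))
      filter_upwards [hev] with k hk
      by_contra hle
      push_neg at hle
      have : ENNReal.ofReal (r (φ k) i) ≤ 1 := ENNReal.ofReal_le_one.2 hle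
      exact absurd hk (not_lt.2 this)
    obtain ⟨k, hk⟩ := hall.exists
    obtain ⟨m, hm⟩ := hμmem (φ k)
    have h1 : r (φ k) m = 1 := by
      simp only [hrdef]
      rw [← hm, div_self (hμpos (φ k)).ne']
    have := hk m
    rw [h1] at this
    exact lt_irrefl _ this
  have hbdd : ∀ i ∉ J, ∃ C : ℝ, ∀ᶠ t : ℝ in atTop, f (allOnes n + t • eVec J) i ≤ C := by
    intro i hiJ
    refine ⟨β * ((L.2 i).toReal + 1), ?_⟩
    filter_upwards [eventually_ge_atTop (0:ℝ)] with t ht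
    have h1 : ∀ᶠ k in atTop, ∀ j, j ∈ J → 1 + t ≤ r (φ k) j := by
      rw [eventually_all]
      intro j
      by_cases hj : j ∈ J
      · have hjt : L.2 j = ⊤ := hj
        have hev : ∀ᶠ k in atTop, ENNReal.ofReal (1 + t) < ENNReal.ofReal (r (φ k) j) := by
          have hT := hρt j
          rw [hjt] at hT
          exact hT.eventually (eventually_mem_set.mpr (Ioi_mem_nhds ENNReal.ofReal_lt_top))
        filter_upwards [hev] with k hk _
        have := (ENNReal.ofReal_lt_ofReal_iff_of_nonneg (by linarith)).1 hk
        linarith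
      · exact Eventually.of_forall (fun k hjj => absurd hjj hj)
    have h2 : ∀ᶠ k in atTop, r (φ k) i ≤ (L.2 i).toReal + 1 :=
      (hrbound i hiJ).mono (fun k hk => hk.le)
    obtain ⟨k, hk1, hk2⟩ := (h1.and h2).exists
    set c : ℝ := (μ (φ k))⁻¹ with hcdef
    have hc : 0 < c := inv_pos.2 (hμpos _)
    have hnn2 : Nonneg (x (φ k)) := fun j => ((hxS _).1 j).le
    have hvle : allOnes n + t • eVec J ≤ c • x (φ k) := by
      intro j
      simp only [Pi.add_apply, Pi.smul_apply, smul_eq_mul, allOnes]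
      by_cases hj : j ∈ J
      · rw [eVec, Set.indicator_of_mem hj]
        have hr := hk1 j hj
        have : r (φ k) j = c * x (φ k) j := by rw [hrdef]; simp [hcdef, div_eq_inv_mul]
        rw [this] at hr
        linarith
      · rw [eVec, Set.indicator_of_notMem hj]
        have hr := hr1 (φ k) j
        have : r (φ k) j = c * x (φ k) j := by rw [hrdef]; simp [hcdef, div_eq_inv_mul]
        rw [this] at hr
        linarith
    have hnn1 : Nonneg (allOnes n + t • eVec J) := by
      intro j
      simp only [Pi.add_apply, Pi.smul_apply, smul_eq_mul, allOnes]
      by_cases hj : j ∈ J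
      · rw [eVec, Set.indicator_of_mem hj]; linarith
      · rw [eVec, Set.indicator_of_notMem hj]; linarith
    have hmono := hf.mono (allOnes n + t • eVec J) (c • x (φ k)) hnn1
      (fun j => mul_nonneg hc.le (hnn2 j)) hvle
    rw [hf.hom c hc (x (φ k)) hnn2] at hmono
    have hmi := hmono i
    simp only [Pi.smul_apply, smul_eq_mul] at hmi
    have hβ0 : (0:ℝ) ≤ β := le_trans hα.le hαβ
    have hfb : f (x (φ k)) i ≤ β * x (φ k) i := ((hxS _).2 i).2
    calc f (allOnes n + t • eVec J) i ≤ c * f (x (φ k)) i := hmi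
      _ ≤ c * (β * x (φ k) i) := mul_le_mul_of_nonneg_left hfb hc.le
      _ = β * r (φ k) i := by rw [hrdef]; simp [hcdef, div_eq_inv_mul]; ring
      _ ≤ β * ((L.2 i).toReal + 1) := mul_le_mul_of_nonneg_left hk2 hβ0
  exact himp ⟨I, J, hIne, hIJ, hJne, heI, hbdd⟩

/-- If an m-topical map is imperturbable, then all slice spaces are bounded in
Hilbert's projective metric. -/
theorem imperturbable_sliceSpaces_bounded {n : ℕ} (hn : 0 < n) (f : Vec n → Vec n)
    (hf : IsMTopical f) (himp : Imperturbable f) :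
    ∀ α β : ℝ, 0 < α → α ≤ β →
      ∃ C : ℝ, ∀ x ∈ SliceSpace f α β, ∀ y ∈ SliceSpace f α β,
        ∃ a b : ℝ, 0 < a ∧ a ≤ b ∧ (∀ i, a * x i ≤ y i ∧ y i ≤ b * x i) ∧
          Real.log (b / a) ≤ C := by
  intro α β hα hαβ
  obtain ⟨δ, hδ0, hδ1, hδ⟩ := key hn f hf himp hα hαβ
  refine ⟨Real.log ((δ^4)⁻¹), ?_⟩
  intro x hx y hy
  set i0 : Fin n := ⟨0, hn⟩
  have hx0 : 0 < x i0 := hx.1 i0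
  have hy0 : 0 < y i0 := hy.1 i0
  refine ⟨δ^2 * (y i0 / x i0), y i0 / (δ^2 * x i0), by positivity, ?_, ?_, ?_⟩
  · have h4 : δ^4 ≤ 1 := pow_le_one₀ hδ0.le hδ1
    rw [mul_div_assoc', div_le_div_iff₀ hx0 (by positivity)]
    nlinarith [mul_pos hy0 hx0]
  · intro i
    have h1 : δ * x i ≤ x i0 := hδ x hx i i0
    have h2 : δ * x i0 ≤ x i := hδ x hx i0 i
    have h3 : δ * y i0 ≤ y i := hδ y hy i0 i
    have h4 : δ * y i ≤ y i0 := hδ y hy i i0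
    constructor
    · have hxi : x i ≤ x i0 / δ := by rw [le_div_iff₀ hδ0]; linarith
      calc δ^2 * (y i0 / x i0) * x i ≤ δ^2 * (y i0 / x i0) * (x i0 / δ) := by
            apply mul_le_mul_of_nonneg_left hxi (by positivity)
        _ = δ * y i0 := by field_simp
        _ ≤ y i := h3
    · have hyi : y i ≤ y i0 / δ := by rw [le_div_iff₀ hδ0]; linarith
      calc y i ≤ y i0 / δ := hyi
        _ = y i0 / (δ^2 * x i0) * (δ * x i0) := by field_simp
        _ ≤ y i0 / (δ^2 * x i0) * x i := mul_le_mul_of_nonneg_left h2 (by positivity)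
  · have heq : y i0 / (δ^2 * x i0) / (δ^2 * (y i0 / x i0)) = (δ^4)⁻¹ := by
      field_simp
    rw [heq]
end

section
/- Let f : ℝⁿ_{≥0} → ℝⁿ_{≥0} be an m-topical map. If for every diagonal matrix D ∈ ℝ^{n×n} with positive diagonal entries the map D∘f has an eigenvector in ℝⁿ_{>0} (i.e., there exist u ∈ ℝⁿ_{>0} and λ > 0 with D(f(u)) = λu), then f is imperturbable. -/
open Filter Set

lemma eVec_cases {n : ℕ} (J : Set (Fin n)) (i : Fin n) :
    eVec J i = 1 ∨ eVec J i = 0 := by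
  by_cases h : i ∈ J <;> simp [eVec, Set.indicator, h]

lemma eVec_nonneg {n : ℕ} (J : Set (Fin n)) (i : Fin n) : 0 ≤ eVec J i := by
  rcases eVec_cases J i with h | h <;> simp [h]

lemma eVec_mem {n : ℕ} {J : Set (Fin n)} {i : Fin n} (h : i ∈ J) : eVec J i = 1 := by
  simp [eVec, Set.indicator, h]

lemma eVec_notMem {n : ℕ} {J : Set (Fin n)} {i : Fin n} (h : i ∉ J) : eVec J i = 0 := by
  simp [eVec, Set.indicator, h]

lemma ones_add_nonneg {n : ℕ} {J : Set (Fin n)} {t : ℝ} (ht : 0 ≤ t) :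
    Nonneg (allOnes n + t • eVec J) := by
  intro i
  have := eVec_nonneg J i
  simp only [Pi.add_apply, Pi.smul_apply, smul_eq_mul, allOnes]
  positivity

/-- If `D ∘ f` has an entrywise positive eigenvector for every diagonal matrix `D` with
positive diagonal entries, then `f` is imperturbable. -/
theorem diag_eigenvector_imperturbable {n : ℕ} (hn : 0 < n) (f : Vec n → Vec n)
    (hf : IsMTopical f)
    (heig : ∀ d : Vec n, Pos d → ∃ u : Vec n, Pos u ∧ ∃ lam : ℝ, 0 < lam ∧
      (fun i => d i * f u i) = lam • u) :
    Imperturbable f := by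
  classical
  haveI : Nonempty (Fin n) := ⟨⟨0, hn⟩⟩
  rintro ⟨I, J, ⟨i1, hi1⟩, hIJ, hJ, hfI, hbd⟩
  -- turn the eventual bounds into bounds for all t ≥ 0
  have hb : ∀ i : Fin n, ∃ Ci : ℝ, i ∉ J → ∀ t : ℝ, 0 ≤ t →
      f (allOnes n + t • eVec J) i ≤ Ci := by
    intro i
    by_cases hi : i ∉ J
    · obtain ⟨Ci, hCi⟩ := hbd i hi
      rw [eventually_atTop] at hCi
      obtain ⟨T, hT⟩ := hCi
      refine ⟨Ci, fun _ t ht => ?_⟩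
      refine le_trans ?_ (hT (max t T) (le_max_right _ _))
      have hmono := hf.mono (allOnes n + t • eVec J) (allOnes n + max t T • eVec J)
        (ones_add_nonneg ht) (ones_add_nonneg (le_trans ht (le_max_left _ _))) ?_
      · exact hmono i
      · intro j
        have := eVec_nonneg J j
        have h2 : t ≤ max t T := le_max_left _ _
        simp only [Pi.add_apply, Pi.smul_apply, smul_eq_mul]
        nlinarith
    · exact ⟨0, fun h => absurd h hi⟩
  choose Ci hCi using hb
  set C : ℝ := max 0 (Finset.univ.sup' Finset.univ_nonempty Ci) with hC
  have hCnn : (0:ℝ) ≤ C := le_max_left _ _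
  have hCle : ∀ i : Fin n, Ci i ≤ C :=
    fun i => le_trans (Finset.le_sup' Ci (Finset.mem_univ i)) (le_max_right _ _)
  -- the diagonal
  set d : Vec n := fun i => if i ∈ I then (C + 1) / f (eVec I) i else 1 with hd
  have hdpos : Pos d := by
    intro i
    by_cases h : i ∈ I
    · simp only [hd, if_pos h]
      exact div_pos (by linarith) (hfI i h)
    · simp [hd, if_neg h]
  obtain ⟨u, hu, lam, hlam, heq⟩ := heig d hdpos
  have heq' : ∀ i, d i * f u i = lam * u i := fun i => congrFun heq i
  have hunn : Nonneg u := fun i => (hu i).le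
  -- lower bound: lam ≥ C + 1
  obtain ⟨im, him, hmin⟩ := Set.exists_min_image I u (Set.toFinite I) ⟨i1, hi1⟩
  set m : ℝ := u im with hm
  have hmpos : 0 < m := hu im
  have hlow : C + 1 ≤ lam := by
    have hle : m • eVec I ≤ u := by
      intro j
      by_cases h : j ∈ I
      · simpa [eVec_mem h] using hmin j h
      · simpa [eVec_notMem h] using (hu j).le
    have h1 : m • f (eVec I) ≤ f u := by
      rw [← hf.hom m hmpos (eVec I) (eVec_nonneg I)]
      exact hf.mono _ _ (fun j => by
        have := eVec_nonneg I j
        simp only [Pi.smul_apply, smul_eq_mul]; positivity) hunn hle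
    have h2 : m * f (eVec I) im ≤ f u im := h1 im
    have h3 := heq' im
    rw [hd] at h3
    simp only [if_pos him] at h3
    have hfim : 0 < f (eVec I) im := hfI im him
    have h4 : (C + 1) * m ≤ lam * m := by
      have : (C + 1) / f (eVec I) im * (m * f (eVec I) im) ≤
          (C + 1) / f (eVec I) im * f u im := by
        apply mul_le_mul_of_nonneg_left h2
        positivity
      rw [h3] at this
      calc (C + 1) * m = (C + 1) / f (eVec I) im * (m * f (eVec I) im) := by
            field_simp
        _ ≤ lam * u im := this
        _ = lam * m := rfl
    exact le_of_mul_le_mul_right h4 hmpos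
  -- upper bound: lam ≤ C
  obtain ⟨j0, hj0⟩ : ∃ j, j ∉ J := by
    by_contra h
    push_neg at h
    exact hJ (Set.eq_univ_of_forall h)
  obtain ⟨i0, hi0, hmax⟩ := Set.exists_max_image Jᶜ u (Set.toFinite _) ⟨j0, hj0⟩
  set a : ℝ := u i0 with ha
  have hapos : 0 < a := hu i0
  obtain ⟨ib, _, hmaxb⟩ := Set.exists_max_image (Set.univ : Set (Fin n)) u
    (Set.toFinite _) ⟨i1, trivial⟩
  set b : ℝ := u ib with hbdef
  have hbpos : 0 < b := hu ib
  have htnn : 0 ≤ b / a := le_of_lt (div_pos hbpos hapos)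
  have hhigh : lam ≤ C := by
    have hle : u ≤ a • (allOnes n + (b / a) • eVec J) := by
      intro j
      have hval : (a • (allOnes n + (b / a) • eVec J)) j = a + b * eVec J j := by
        simp only [Pi.smul_apply, Pi.add_apply, smul_eq_mul, allOnes]
        field_simp
      rw [hval]
      by_cases h : j ∈ J
      · rw [eVec_mem h]
        have := hmaxb j trivial
        nlinarith
      · rw [eVec_notMem h]
        have := hmax j h
        simpa using this
    have h1 : f u ≤ a • f (allOnes n + (b / a) • eVec J) := by
      rw [← hf.hom a hapos _ (ones_add_nonneg htnn)]
      exact hf.mono _ _ hunn (fun j => by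
        have hnn := ones_add_nonneg (J := J) htnn j
        simp only [Pi.smul_apply, smul_eq_mul]
        positivity) hle
    have h2 : f u i0 ≤ a * f (allOnes n + (b / a) • eVec J) i0 := h1 i0
    have h3 : f (allOnes n + (b / a) • eVec J) i0 ≤ C :=
      le_trans (hCi i0 hi0 _ htnn) (hCle i0)
    have h4 := heq' i0
    rw [hd] at h4
    have hi0I : i0 ∉ I := fun h => hi0 (hIJ h)
    simp only [if_neg hi0I, one_mul] at h4
    have : lam * a ≤ C * a := by
      calc lam * a = f u i0 := by rw [← h4]
        _ ≤ a * f (allOnes n + (b / a) • eVec J) i0 := h2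
        _ ≤ a * C := by apply mul_le_mul_of_nonneg_left h3 hapos.le
        _ = C * a := mul_comm _ _
    exact le_of_mul_le_mul_right this hapos
  linarith
end

section
/- If an m-topical map f : ℝⁿ_{≥0} → ℝⁿ_{≥0} is partially irreducible, then f is imperturbable. -/
open Filter Set

/-- The part `P_J` of the standard cone. -/
def ConePart {n : ℕ} (J : Set (Fin n)) : Set (Vec n) :=
  {x | Nonneg x ∧ ∀ i, 0 < x i ↔ i ∈ J}

/-- `f` is partially irreducible: no nontrivial proper part is invariant. -/
def PartiallyIrreducible {n : ℕ} (f : Vec n → Vec n) : Prop :=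
  ¬ ∃ J : Set (Fin n), J.Nonempty ∧ J ≠ univ ∧ ∀ x ∈ ConePart J, f x ∈ ConePart J

open Topology

/-
If `I ⊆ J ⊊ [n]` witness perturbability, homogeneity turns the boundedness of
`f(𝟙 + t e_J)_i` into `f(e_J)_i ≤ C / t`, so `f(e_J)` vanishes off `J`. The map
`L ↦ supp f(e_L)` is monotone, enlarges `I` and shrinks `J`, so Knaster–Tarski gives
`I ⊆ L ⊆ J` with `supp f(e_L) = L`. Every `x ∈ P_L` is squeezed between two positive
multiples of `e_L`, hence `supp f(x) = L`, and `P_L` is a nonempty proper invariant part.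
-/

theorem OrderHom.exists_fixed_mem_Icc {α : Type*} [CompleteLattice α] (f : α →o α) {a b : α}
    (ha : a ≤ f a) (hb : f b ≤ b) (hab : a ≤ b) : ∃ c, a ≤ c ∧ c ≤ b ∧ f c = c :=
  ⟨f.nextFixed a ha, f.le_nextFixed ha, OrderHom.lfp_le _ (sup_le hab hb), (f.nextFixed a ha).2⟩

section eVec

variable {n : ℕ}

theorem eVec_apply_of_mem {J : Set (Fin n)} {i : Fin n} (h : i ∈ J) : eVec J i = 1 :=
  Set.indicator_of_mem h _

theorem eVec_apply_of_notMem {J : Set (Fin n)} {i : Fin n} (h : i ∉ J) : eVec J i = 0 :=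
  Set.indicator_of_notMem h _

theorem nonneg_eVec (J : Set (Fin n)) : Nonneg (eVec J) :=
  fun _ => Set.indicator_nonneg (fun _ _ => zero_le_one) _

theorem eVec_mono : Monotone (eVec : Set (Fin n) → Vec n) :=
  fun _ _ h => Set.indicator_le_indicator_of_subset h fun _ => zero_le_one

theorem Nonneg.smul {x : Vec n} (hx : Nonneg x) {c : ℝ} (hc : 0 ≤ c) : Nonneg (c • x) :=
  fun i => mul_nonneg hc (hx i)

theorem exists_smul_eVec_le_of_mem_conePart {L : Set (Fin n)} {x : Vec n}
    (hx : x ∈ ConePart L) : ∃ a : ℝ, 0 < a ∧ a • eVec L ≤ x := by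
  have hlow : ∀ᶠ a in 𝓝[>] (0 : ℝ), ∀ i, i ∈ L → a ≤ x i :=
    eventually_all.2 fun i => eventually_imp_distrib_left.2 fun hi =>
      (eventually_le_nhds ((hx.2 i).2 hi)).filter_mono nhdsWithin_le_nhds
  obtain ⟨a, ha, hax⟩ := (eventually_mem_nhdsWithin.and hlow).exists
  refine ⟨a, ha, fun i => ?_⟩
  by_cases hi : i ∈ L
  · simpa [eVec_apply_of_mem hi] using hax i hi
  · simpa [eVec_apply_of_notMem hi] using hx.1 i

theorem exists_le_smul_eVec_of_mem_conePart {L : Set (Fin n)} {x : Vec n}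
    (hx : x ∈ ConePart L) : ∃ b : ℝ, 0 < b ∧ x ≤ b • eVec L := by
  have hup : ∀ᶠ b in atTop, ∀ i, x i ≤ b := eventually_all.2 fun i => eventually_ge_atTop _
  obtain ⟨b, hb, hxb⟩ := ((eventually_gt_atTop 0).and hup).exists
  refine ⟨b, hb, fun i => ?_⟩
  by_cases hi : i ∈ L
  · simpa [eVec_apply_of_mem hi] using hxb i
  · have : ¬ 0 < x i := fun h => hi ((hx.2 i).1 h)
    simpa [eVec_apply_of_notMem hi] using this

end eVec

namespace IsMTopical

variable {n : ℕ} {f : Vec n → Vec n}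

theorem apply_smul (hf : IsMTopical f) {c : ℝ} (hc : 0 < c) {x : Vec n} (hx : Nonneg x)
    (i : Fin n) : f (c • x) i = c * f x i := by
  rw [hf.hom c hc x hx, Pi.smul_apply, smul_eq_mul]

theorem apply_eq_zero_of_eventually_le (hf : IsMTopical f) {x : Vec n} (hx : Nonneg x)
    {i : Fin n} {C : ℝ} (hC : ∀ᶠ t : ℝ in atTop, f (allOnes n + t • x) i ≤ C) :
    f x i = 0 := by
  have hbound : ∀ᶠ t : ℝ in atTop, f x i ≤ t⁻¹ * C := by
    filter_upwards [hC, eventually_gt_atTop 0] with t ht htpos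
    have hnonneg : Nonneg (allOnes n + t • x) := fun j =>
      add_nonneg zero_le_one (mul_nonneg htpos.le (hx j))
    -- `x ≤ t⁻¹ • (𝟙 + t • x) = t⁻¹ • 𝟙 + x`
    have hle : x ≤ t⁻¹ • (allOnes n + t • x) := fun j => by
      simp [allOnes, mul_add, inv_mul_cancel_left₀ htpos.ne', htpos.le]
    calc f x i ≤ f (t⁻¹ • (allOnes n + t • x)) i :=
          hf.mono _ _ hx (hnonneg.smul (inv_nonneg.2 htpos.le)) hle i
      _ = t⁻¹ * f (allOnes n + t • x) i := hf.apply_smul (inv_pos.2 htpos) hnonneg i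
      _ ≤ t⁻¹ * C := mul_le_mul_of_nonneg_left ht (inv_nonneg.2 htpos.le)
  have hlim : Tendsto (fun t : ℝ => t⁻¹ * C) atTop (𝓝 0) := by
    simpa using tendsto_inv_atTop_zero.mul_const C
  exact le_antisymm (ge_of_tendsto hlim hbound) (hf.map_nonneg x hx i)

theorem pos_apply_iff_of_mem_conePart (hf : IsMTopical f) {L : Set (Fin n)} {x : Vec n}
    (hx : x ∈ ConePart L) (i : Fin n) : 0 < f x i ↔ 0 < f (eVec L) i := by
  obtain ⟨a, ha, hax⟩ := exists_smul_eVec_le_of_mem_conePart hx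
  obtain ⟨b, hb, hxb⟩ := exists_le_smul_eVec_of_mem_conePart hx
  have he := nonneg_eVec L
  have hlow : a * f (eVec L) i ≤ f x i := by
    rw [← hf.apply_smul ha he]
    exact hf.mono _ _ (he.smul ha.le) hx.1 hax i
  have hhigh : f x i ≤ b * f (eVec L) i := by
    rw [← hf.apply_smul hb he]
    exact hf.mono _ _ hx.1 (he.smul hb.le) hxb i
  exact ⟨fun h => pos_of_mul_pos_right (h.trans_le hhigh) hb.le,
    fun h => (mul_pos ha h).trans_le hlow⟩

def supportStep (hf : IsMTopical f) : Set (Fin n) →o Set (Fin n) where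
  toFun L := {i | 0 < f (eVec L) i}
  monotone' _ _ h i hi :=
    hi.trans_le (hf.mono _ _ (nonneg_eVec _) (nonneg_eVec _) (eVec_mono h) i)

theorem mapsTo_conePart_of_supportStep_eq (hf : IsMTopical f) {L : Set (Fin n)}
    (hL : hf.supportStep L = L) : MapsTo f (ConePart L) (ConePart L) := fun x hx =>
  ⟨hf.map_nonneg x hx.1, fun i => by
    rw [hf.pos_apply_iff_of_mem_conePart hx i]
    exact Set.ext_iff.1 hL i⟩

end IsMTopical

theorem partiallyIrreducible_imperturbable_general {n : ℕ} (f : Vec n → Vec n)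
    (hf : IsMTopical f) (hirr : PartiallyIrreducible f) : Imperturbable f := by
  rintro ⟨I, J, hI, hIJ, hJ, hIpos, hbounded⟩
  have hstepJ : hf.supportStep J ⊆ J := fun i hi => by
    by_contra hiJ
    obtain ⟨C, hC⟩ := hbounded i hiJ
    exact (hi : 0 < f (eVec J) i).ne' (hf.apply_eq_zero_of_eventually_le (nonneg_eVec J) hC)
  obtain ⟨L, hIL, hLJ, hL⟩ := hf.supportStep.exists_fixed_mem_Icc hIpos hstepJ hIJ
  exact hirr ⟨L, hI.mono hIL, fun h => hJ (eq_univ_of_univ_subset (h ▸ hLJ)),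
    hf.mapsTo_conePart_of_supportStep_eq hL⟩

/-- Partial irreducibility implies imperturbability. -/
theorem partiallyIrreducible_imperturbable {n : ℕ} (hn : 0 < n) (f : Vec n → Vec n)
    (hf : IsMTopical f) (hirr : PartiallyIrreducible f) : Imperturbable f :=
  partiallyIrreducible_imperturbable_general f hf hirr
end

section
/- If an m-topical map f : ℝⁿ_{≥0} → ℝⁿ_{≥0} is subadditive (f(x+y) ≤ f(x)+f(y) entrywise for all x, y ∈ ℝⁿ_{≥0}) and imperturbable, then f is partially irreducible. -/
open Filter Set

/-- A subadditive imperturbable m-topical map is partially irreducible. -/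
theorem subadditive_imperturbable_partiallyIrreducible {n : ℕ} (hn : 0 < n)
    (f : Vec n → Vec n) (hf : IsMTopical f)
    (hsub : ∀ x y : Vec n, Nonneg x → Nonneg y → f (x + y) ≤ f x + f y)
    (himp : Imperturbable f) : PartiallyIrreducible f := by
  rintro ⟨J, hJne, hJuniv, hinv⟩
  have heJnn : Nonneg (eVec J) := fun i => Set.indicator_apply_nonneg (fun _ => zero_le_one)
  have heJ : eVec J ∈ ConePart J := by
    refine ⟨heJnn, fun i => ?_⟩
    constructor
    · intro h
      by_contra hi
      rw [eVec, Set.indicator_of_notMem hi] at h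
      exact lt_irrefl 0 h
    · intro hi
      rw [eVec, Set.indicator_of_mem hi]
      exact one_pos
  have hfeJ := hinv _ heJ
  have hzero : ∀ i ∉ J, f (eVec J) i = 0 := fun i hi =>
    le_antisymm (not_lt.mp (fun h => hi ((hfeJ.2 i).mp h))) (hfeJ.1 i)
  apply himp
  refine ⟨J, J, hJne, le_refl J, hJuniv, fun i hi => (hfeJ.2 i).mpr hi, fun i hi => ?_⟩
  refine ⟨f (allOnes n) i, ?_⟩
  filter_upwards [eventually_gt_atTop (0:ℝ)] with t ht
  have h1 : Nonneg (allOnes n) := fun j => zero_le_one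
  have h2 : Nonneg (t • eVec J) := fun j => mul_nonneg ht.le (heJnn j)
  have := hsub (allOnes n) (t • eVec J) h1 h2
  have hb := this i
  rw [hf.hom t ht _ heJnn] at hb
  simp only [Pi.add_apply, Pi.smul_apply, smul_eq_mul, hzero i hi, mul_zero, add_zero] at hb
  exact hb
end

section
/- Let f : ℝⁿ_{≥0} → ℝⁿ_{≥0} be an m-topical map with an eigenvector u ∈ ℝⁿ_{>0} (so f(u) = λu for some λ > 0). If f satisfies condition (M) at u, then u is the only eigenvector of f in ℝⁿ_{>0} up to scaling: every v ∈ ℝⁿ_{>0} with f(v) = μv for some μ > 0 is a positive scalar multiple of u. -/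
open Filter Set

/-- `f` satisfies condition (M) at `x`: for every nonempty proper `J ⊂ [n]` and every
`t > 0` there exists `i ∉ J` such that `f(x + t e_J)_i > f(x)_i`. -/
def CondM {n : ℕ} (f : Vec n → Vec n) (x : Vec n) : Prop :=
  ∀ J : Set (Fin n), J.Nonempty → J ≠ univ → ∀ t : ℝ, 0 < t →
    ∃ i ∉ J, f x i < f (x + t • eVec J) i

/-- If an m-topical map satisfies condition (M) at a positive eigenvector `u`, then `u`
is the only eigenvector in the interior of the standard cone, up to scaling. -/
theorem condM_unique_eigenvector {n : ℕ} (hn : 0 < n) (f : Vec n → Vec n)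
    (hf : IsMTopical f) (u : Vec n) (hu : Pos u) (lam : ℝ) (hlam : 0 < lam)
    (heig : f u = lam • u) (hM : CondM f u) :
    ∀ v : Vec n, Pos v → ∀ mu : ℝ, 0 < mu → f v = mu • v →
      ∃ c : ℝ, 0 < c ∧ v = c • u := by
  intro v hv mu hmu heigv
  haveI : Nonempty (Fin n) := ⟨⟨0, hn⟩⟩
  have hune : Nonneg u := fun i => (hu i).le
  have hvne : Nonneg v := fun i => (hv i).le
  -- First: mu ≤ lam, using only monotonicity and homogeneity
  set c' : ℝ := Finset.univ.inf' Finset.univ_nonempty (fun i => u i / v i) with hc'def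
  have hc'pos : 0 < c' := by
    rw [hc'def, Finset.lt_inf'_iff]
    exact fun i _ => div_pos (hu i) (hv i)
  have hc'le : ∀ i, c' * v i ≤ u i := by
    intro i
    have h := Finset.inf'_le (fun i => u i / v i) (Finset.mem_univ i)
    exact (le_div_iff₀ (hv i)).mp h
  obtain ⟨i1, -, hi1⟩ := Finset.exists_mem_eq_inf' (Finset.univ_nonempty (α := Fin n))
    (fun i => u i / v i)
  have hui1 : u i1 = c' * v i1 := by
    rw [hc'def, hi1]
    exact (div_mul_cancel₀ _ (ne_of_gt (hv i1))).symm
  have hc'vnn : Nonneg (c' • v) := fun i => mul_nonneg hc'pos.le (hvne i)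
  have h2 : f (c' • v) ≤ f u := hf.mono _ _ hc'vnn hune (fun i => hc'le i)
  rw [hf.hom c' hc'pos v hvne, heigv, heig] at h2
  have hmule : mu ≤ lam := by
    have h3 := h2 i1
    simp only [Pi.smul_apply, smul_eq_mul] at h3
    rw [hui1] at h3
    nlinarith [mul_pos hc'pos (hv i1)]
  -- Main part
  set c : ℝ := Finset.univ.inf' Finset.univ_nonempty (fun i => v i / u i) with hcdef
  have hcpos : 0 < c := by
    rw [hcdef, Finset.lt_inf'_iff]
    exact fun i _ => div_pos (hv i) (hu i)
  have hcle : ∀ i, c * u i ≤ v i := by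
    intro i
    have h := Finset.inf'_le (fun i => v i / u i) (Finset.mem_univ i)
    exact (le_div_iff₀ (hu i)).mp h
  obtain ⟨i0, -, hi0⟩ := Finset.exists_mem_eq_inf' (Finset.univ_nonempty (α := Fin n))
    (fun i => v i / u i)
  have hvi0 : v i0 = c * u i0 := by
    rw [hcdef, hi0]
    exact (div_mul_cancel₀ _ (ne_of_gt (hu i0))).symm
  by_cases hall : ∀ i, v i = c * u i
  · exact ⟨c, hcpos, funext fun i => hall i⟩
  · exfalso
    push_neg at hall
    set J : Set (Fin n) := {i | v i ≠ c * u i} with hJdef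
    have hJne : J.Nonempty := hall
    have hJnu : J ≠ univ := by
      intro h
      have : i0 ∈ J := h ▸ mem_univ i0
      exact this hvi0
    set S : Finset (Fin n) := Finset.univ.filter (fun i => v i ≠ c * u i) with hSdef
    have hS : S.Nonempty := by
      obtain ⟨j, hj⟩ := hall
      exact ⟨j, Finset.mem_filter.mpr ⟨Finset.mem_univ j, hj⟩⟩
    set t : ℝ := S.inf' hS (fun i => v i - c * u i) with htdef
    have ht : 0 < t := by
      rw [htdef, Finset.lt_inf'_iff]
      intro i hi
      have hine := (Finset.mem_filter.mp hi).2
      have := hcle i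
      cases lt_or_eq_of_le this with
      | inl h => linarith
      | inr h => exact absurd h.symm hine
    set t' : ℝ := t / c with ht'def
    have ht' : 0 < t' := div_pos ht hcpos
    have heVnn : ∀ i, 0 ≤ eVec J i := fun i =>
      Set.indicator_nonneg (fun _ _ => zero_le_one) i
    have hne : Nonneg (u + t' • eVec J) := fun i =>
      add_nonneg (hune i) (mul_nonneg ht'.le (heVnn i))
    have key : ∀ i, c * ((u + t' • eVec J) i) ≤ v i := by
      intro i
      simp only [Pi.add_apply, Pi.smul_apply, smul_eq_mul]
      by_cases hi : i ∈ J
      · have hiS : i ∈ S := Finset.mem_filter.mpr ⟨Finset.mem_univ i, hi⟩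
        have hle := Finset.inf'_le (fun i => v i - c * u i) hiS
        have he1 : eVec J i = 1 := Set.indicator_of_mem hi _
        rw [he1]
        have hct : c * t' = t := by
          rw [ht'def]; field_simp
        have : c * (u i + t' * 1) = c * u i + c * t' := by ring
        rw [this, hct]
        simp only [htdef] at hle ⊢
        linarith
      · have he0 : eVec J i = 0 := Set.indicator_of_notMem hi _
        rw [he0]
        simpa using hcle i
    have h3 : f (c • (u + t' • eVec J)) ≤ f v :=
      hf.mono _ _ (fun i => mul_nonneg hcpos.le (hne i)) hvne (fun i => key i)
    rw [hf.hom c hcpos _ hne, heigv] at h3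
    obtain ⟨i, hiJ, hlt⟩ := hM J hJne hJnu t' ht'
    have hvi : v i = c * u i := not_not.mp hiJ
    have h4 : c * f (u + t' • eVec J) i ≤ mu * v i := h3 i
    have h5 : f u i = lam * u i := by
      have := congrFun heig i
      simpa using this
    rw [h5] at hlt
    have hlamlt : lam * v i < mu * v i := by
      calc lam * v i = c * (lam * u i) := by rw [hvi]; ring
        _ < c * f (u + t' • eVec J) i := by
            exact (mul_lt_mul_iff_right₀ hcpos).mpr hlt
        _ ≤ mu * v i := h4
    have : lam < mu := lt_of_mul_lt_mul_right (by linarith [hlamlt]) (hv i).le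
    linarith
end

section
/- Let f, g : ℝⁿ_{≥0} → ℝⁿ_{≥0} be m-topical maps, let u ∈ ℝⁿ_{>0} and set v = g(u). Then for every J ⊆ {1,…,n} and every i ∈ {1,…,n}: (f(g(u + t e_J))_i > f(g(u))_i for all t > 0) if and only if (f(v + s e_I)_i > f(v)_i for all s > 0), where I = {j ∈ {1,…,n} : g(u + t e_J)_j > g(u)_j for all t > 0}. In other words, the upper local signature of f∘g at u equals the composition of the upper local signature of f at v with the upper local signature of g at u. -/
open Filter Set

/-- Upper local signature of `f` at `u`: `f(u + t e_J)_i > f(u)_i` for all `t > 0`. -/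
def UpperLoc {n : ℕ} (f : Vec n → Vec n) (u : Vec n) (J : Set (Fin n)) (i : Fin n) : Prop :=
  ∀ t : ℝ, 0 < t → f u i < f (u + t • eVec J) i

/-- The upper local signature of a composition is the composition of the upper local
signatures. -/
theorem upperLocalSignature_comp {n : ℕ} (hn : 0 < n) (f g : Vec n → Vec n)
    (hf : IsMTopical f) (hg : IsMTopical g) (u : Vec n) (hu : Pos u) :
    ∀ J : Set (Fin n), ∀ i : Fin n,
      UpperLoc (fun x => f (g x)) u J i ↔
        UpperLoc f (g u) {j : Fin n | UpperLoc g u J j} i := by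
  classical
  intro J i
  set v := g u with hv
  set I : Set (Fin n) := {j : Fin n | UpperLoc g u J j} with hI
  have hu0 : Nonneg u := fun j => (hu j).le
  have hvpos : Pos v := hg.map_pos u hu
  have hv0 : Nonneg v := fun j => (hvpos j).le
  have heJ0 : ∀ (K : Set (Fin n)) (j : Fin n), 0 ≤ eVec K j := by
    intro K j
    exact Set.indicator_nonneg (fun _ _ => zero_le_one) j
  have hpath0 : ∀ t : ℝ, 0 ≤ t → Nonneg (u + t • eVec J) := by
    intro t ht j
    have h2 : (0:ℝ) ≤ t * eVec J j := mul_nonneg ht (heJ0 J j)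
    simpa using add_nonneg (hu0 j) h2
  have hgv : ∀ t : ℝ, 0 ≤ t → v ≤ g (u + t • eVec J) := by
    intro t ht
    have hle : u ≤ u + t • eVec J := by
      intro j
      have h2 : (0:ℝ) ≤ t * eVec J j := mul_nonneg ht (heJ0 J j)
      simpa using h2
    rw [hv]
    exact hg.mono u _ hu0 (hpath0 t ht) hle
  constructor
  · intro h s hs
    have hcw : ContinuousWithinAt (fun t : ℝ => g (u + t • eVec J)) (Ici 0) 0 := by
      have hpathc : Continuous (fun t : ℝ => u + t • eVec J) :=
        continuous_const.add (continuous_id.smul continuous_const)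
      have hmaps : MapsTo (fun t : ℝ => u + t • eVec J) (Ici (0:ℝ)) {x | Nonneg x} :=
        fun t ht => hpath0 t ht
      exact (hg.contOn.comp hpathc.continuousOn hmaps) 0 Set.self_mem_Ici
    have hcont : Tendsto (fun t : ℝ => g (u + t • eVec J)) (nhdsWithin 0 (Ici 0)) (nhds v) := by
      have h0 : g (u + (0:ℝ) • eVec J) = v := by simp [hv]
      have := hcw.tendsto
      rwa [h0] at this
    have hev : ∀ j : Fin n, ∀ᶠ t in nhdsWithin (0:ℝ) (Ioi 0),
        g (u + t • eVec J) j ≤ v j + s * eVec I j := by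
      intro j
      by_cases hj : j ∈ I
      · have hjc : Tendsto (fun t : ℝ => g (u + t • eVec J) j)
            (nhdsWithin (0:ℝ) (Ioi 0)) (nhds (v j)) := by
          have h2 := ((continuous_apply j).tendsto v).comp hcont
          exact h2.mono_left (nhdsWithin_mono 0 Ioi_subset_Ici_self)
        have hev2 : ∀ᶠ t in nhdsWithin (0:ℝ) (Ioi 0), g (u + t • eVec J) j < v j + s :=
          hjc.eventually_lt_const (by linarith)
        filter_upwards [hev2] with t ht2
        have h1 : eVec I j = 1 := by simp [eVec, hj]
        rw [h1, mul_one]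
        exact ht2.le
      · have hnj : ¬ UpperLoc g u J j := hj
        rw [UpperLoc] at hnj
        push_neg at hnj
        obtain ⟨t0, ht0, hle0⟩ := hnj
        have hIoc : Ioc (0:ℝ) t0 ∈ nhdsWithin (0:ℝ) (Ioi 0) :=
          Ioc_mem_nhdsGT_of_mem ⟨le_refl 0, ht0⟩
        filter_upwards [hIoc] with t ht2
        have hmono : g (u + t • eVec J) ≤ g (u + t0 • eVec J) := by
          apply hg.mono _ _ (hpath0 t ht2.1.le) (hpath0 t0 ht0.le)
          intro k
          have h2 : t * eVec J k ≤ t0 * eVec J k :=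
            mul_le_mul_of_nonneg_right ht2.2 (heJ0 J k)
          simpa using h2
        have h1 : g (u + t • eVec J) j ≤ v j := le_trans (hmono j) (by rw [hv]; exact hle0)
        have h0 : eVec I j = 0 := by simp [eVec, hj]
        rw [h0, mul_zero, add_zero]
        exact h1
    have hall : ∀ᶠ t in nhdsWithin (0:ℝ) (Ioi 0),
        ∀ j, g (u + t • eVec J) j ≤ v j + s * eVec I j := eventually_all.mpr hev
    have hmem : ∀ᶠ t in nhdsWithin (0:ℝ) (Ioi 0), t ∈ Ioi (0:ℝ) :=
      eventually_mem_nhdsWithin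
    obtain ⟨t, hle, ht⟩ := (hall.and hmem).exists
    have hge : g (u + t • eVec J) ≤ v + s • eVec I := by
      intro j; simpa using hle j
    have hnn1 : Nonneg (g (u + t • eVec J)) := hg.map_nonneg _ (hpath0 t (le_of_lt ht))
    have hnn2 : Nonneg (v + s • eVec I) := by
      intro j
      have h2 := mul_nonneg hs.le (heJ0 I j)
      simpa using add_nonneg (hv0 j) h2
    calc f v i < f (g (u + t • eVec J)) i := h t ht
      _ ≤ f (v + s • eVec I) i := hf.mono _ _ hnn1 hnn2 hge i
  · intro h t ht
    by_cases hIne : ∃ j, j ∈ I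
    · obtain ⟨j0, hj0⟩ := hIne
      set S : Finset (Fin n) := Finset.univ.filter (fun j => j ∈ I) with hS
      have hSne : S.Nonempty := ⟨j0, by simp [hS, hj0]⟩
      set s := S.inf' hSne (fun j => g (u + t • eVec J) j - v j) with hsdef
      have hs : 0 < s := by
        rw [hsdef, Finset.lt_inf'_iff]
        intro j hj
        have hjI : UpperLoc g u J j := by simpa [hS, hI] using hj
        have h2 := hjI t ht
        rw [← hv] at h2
        linarith
      have hle : v + s • eVec I ≤ g (u + t • eVec J) := by
        intro j
        by_cases hj : j ∈ I
        · have hjs : s ≤ g (u + t • eVec J) j - v j := by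
            rw [hsdef]
            apply Finset.inf'_le
            simp [hS, hj]
          have h1 : eVec I j = 1 := by simp [eVec, hj]
          simp only [Pi.add_apply, Pi.smul_apply, smul_eq_mul, h1, mul_one]
          linarith
        · have h0 : eVec I j = 0 := by simp [eVec, hj]
          simp only [Pi.add_apply, Pi.smul_apply, smul_eq_mul, h0, mul_zero, add_zero]
          exact hgv t ht.le j
      have hnn2 : Nonneg (v + s • eVec I) := by
        intro j
        have h2 := mul_nonneg hs.le (heJ0 I j)
        simpa using add_nonneg (hv0 j) h2
      calc f v i < f (v + s • eVec I) i := h s hs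
        _ ≤ f (g (u + t • eVec J)) i :=
          hf.mono _ _ hnn2 (hg.map_nonneg _ (hpath0 t ht.le)) hle i
    · push_neg at hIne
      have heI : eVec I = 0 := by
        funext j
        simp [eVec, hIne j]
      have h2 := h 1 one_pos
      rw [heI] at h2
      simp at h2
end

section
/- Let f, g : ℝⁿ_{≥0} → ℝⁿ_{≥0} be m-topical maps, let u ∈ ℝⁿ_{>0}, and let a, b > 0 be reals. Then for every J ⊆ {1,…,n} and every i ∈ {1,…,n}: (a·f(u + t e_J)_i + b·g(u + t e_J)_i > a·f(u)_i + b·g(u)_i for all t > 0) if and only if (f(u + t e_J)_i > f(u)_i for all t > 0) or (g(u + t e_J)_i > g(u)_i for all t > 0). In other words, the upper local signature of a·f + b·g at u equals the entrywise join of the upper local signatures of f and g at u. -/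
open Filter Set

/-- The upper local signature of `a·f + b·g` at `u` is the join of the upper local
signatures of `f` and `g` at `u`. -/
theorem upperLocalSignature_add {n : ℕ} (hn : 0 < n) (f g : Vec n → Vec n)
    (hf : IsMTopical f) (hg : IsMTopical g) (u : Vec n) (hu : Pos u)
    (a b : ℝ) (ha : 0 < a) (hb : 0 < b) :
    ∀ J : Set (Fin n), ∀ i : Fin n,
      (∀ t : ℝ, 0 < t →
          a * f u i + b * g u i <
            a * f (u + t • eVec J) i + b * g (u + t • eVec J) i) ↔
        (UpperLoc f u J i ∨ UpperLoc g u J i) := by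
  intro J i
  have hunn : Nonneg u := fun j => (hu j).le
  have heJ : ∀ j, 0 ≤ eVec J j := by
    intro j
    unfold eVec
    exact Set.indicator_nonneg (fun _ _ => zero_le_one) j
  have hnn : ∀ t : ℝ, 0 ≤ t → Nonneg (u + t • eVec J) := by
    intro t ht j
    have : 0 ≤ t * eVec J j := mul_nonneg ht (heJ j)
    simpa [Pi.add_apply] using add_nonneg (hunn j) this
  have hle : ∀ t : ℝ, 0 ≤ t → u ≤ u + t • eVec J := by
    intro t ht j
    have : 0 ≤ t * eVec J j := mul_nonneg ht (heJ j)
    simp [Pi.add_apply]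
    linarith
  have hmono : ∀ (h : Vec n → Vec n), IsMTopical h → ∀ s t : ℝ, 0 ≤ s → s ≤ t →
      h (u + s • eVec J) i ≤ h (u + t • eVec J) i := by
    intro h hh s t hs hst
    refine hh.mono _ _ (hnn s hs) (hnn t (hs.trans hst)) (fun j => ?_) i
    simp only [Pi.add_apply, Pi.smul_apply, smul_eq_mul]
    have := mul_le_mul_of_nonneg_right hst (heJ j)
    linarith
  have hfle : ∀ t : ℝ, 0 ≤ t → f u i ≤ f (u + t • eVec J) i :=
    fun t ht => hf.mono _ _ hunn (hnn t ht) (hle t ht) i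
  have hgle : ∀ t : ℝ, 0 ≤ t → g u i ≤ g (u + t • eVec J) i :=
    fun t ht => hg.mono _ _ hunn (hnn t ht) (hle t ht) i
  constructor
  · intro H
    by_contra hc
    push_neg at hc
    obtain ⟨hcf, hcg⟩ := hc
    unfold UpperLoc at hcf hcg
    push_neg at hcf hcg
    obtain ⟨t₁, ht₁, hft⟩ := hcf
    obtain ⟨t₂, ht₂, hgt⟩ := hcg
    set t := min t₁ t₂ with htdef
    have ht : 0 < t := lt_min ht₁ ht₂
    have hfeq : f (u + t • eVec J) i ≤ f u i :=
      le_trans (hmono f hf t t₁ ht.le (min_le_left _ _)) hft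
    have hgeq : g (u + t • eVec J) i ≤ g u i :=
      le_trans (hmono g hg t t₂ ht.le (min_le_right _ _)) hgt
    have := H t ht
    nlinarith
  · rintro (hF | hG) t ht
    · have h1 := hF t ht
      have h2 := hgle t ht.le
      nlinarith
    · have h1 := hG t ht
      have h2 := hfle t ht.le
      nlinarith
end

section
/- Let f, g : ℝⁿ_{≥0} → ℝⁿ_{≥0} be m-topical maps, let u ∈ ℝⁿ_{>0}, and let a, b > 0 be reals. Then for every J ⊆ {1,…,n} and every i ∈ {1,…,n}: (a·f(u − t e_J)_i + b·g(u − t e_J)_i < a·f(u)_i + b·g(u)_i for all sufficiently small t > 0) if and only if (f(u − t e_J)_i < f(u)_i for all sufficiently small t > 0) or (g(u − t e_J)_i < g(u)_i for all sufficiently small t > 0). In other words, the lower local signature of a·f + b·g at u equals the entrywise join of the lower local signatures of f and g at u. -/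
open Filter Set

/-- Lower local signature of `f` at `u`: `f(u - t e_J)_i < f(u)_i` for all sufficiently
small `t > 0`. -/
def LowerLoc {n : ℕ} (f : Vec n → Vec n) (u : Vec n) (J : Set (Fin n)) (i : Fin n) : Prop :=
  ∃ δ : ℝ, 0 < δ ∧ ∀ t : ℝ, 0 < t → t < δ → f (u - t • eVec J) i < f u i

/-- The lower local signature of `a·f + b·g` at `u` is the join of the lower local
signatures of `f` and `g` at `u`. -/
theorem lowerLocalSignature_add {n : ℕ} (hn : 0 < n) (f g : Vec n → Vec n)
    (hf : IsMTopical f) (hg : IsMTopical g) (u : Vec n) (hu : Pos u)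
    (a b : ℝ) (ha : 0 < a) (hb : 0 < b) :
    ∀ J : Set (Fin n), ∀ i : Fin n,
      (∃ δ : ℝ, 0 < δ ∧ ∀ t : ℝ, 0 < t → t < δ →
          a * f (u - t • eVec J) i + b * g (u - t • eVec J) i <
            a * f u i + b * g u i) ↔
        (LowerLoc f u J i ∨ LowerLoc g u J i) := by
  haveI : Nonempty (Fin n) := ⟨⟨0, hn⟩⟩
  intro J i
  set e := eVec J with he
  have he0 : ∀ k, 0 ≤ e k := fun k => Set.indicator_nonneg (fun _ _ => zero_le_one) k
  have he1 : ∀ k, e k ≤ 1 := by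
    intro k
    by_cases hk : k ∈ J <;> simp [he, eVec, Set.indicator_apply, hk]
  set δ0 : ℝ := Finset.univ.inf' Finset.univ_nonempty u with hδ0def
  have hδ0 : 0 < δ0 := by
    rw [hδ0def, Finset.lt_inf'_iff]
    exact fun k _ => hu k
  have hδ0le : ∀ k, δ0 ≤ u k := fun k => Finset.inf'_le _ (Finset.mem_univ k)
  have hnn : ∀ t : ℝ, 0 ≤ t → t ≤ δ0 → Nonneg (u - t • e) := by
    intro t ht htδ k
    have h1 : t * e k ≤ t := by nlinarith [he0 k, he1 k]
    have h2 : δ0 ≤ u k := hδ0le k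
    simp only [Pi.sub_apply, Pi.smul_apply, smul_eq_mul]
    linarith
  have hle : ∀ s t : ℝ, 0 ≤ s → s ≤ t → u - t • e ≤ u - s • e := by
    intro s t hs hst k
    simp only [Pi.sub_apply, Pi.smul_apply, smul_eq_mul]
    nlinarith [he0 k]
  have hu0 : Nonneg u := fun k => (hu k).le
  have key : ∀ (h : Vec n → Vec n), IsMTopical h → ∀ t : ℝ, 0 ≤ t → t ≤ δ0 →
      h (u - t • e) i ≤ h u i := by
    intro h hh t ht htδ
    have hle' : u - t • e ≤ u := by
      have := hle 0 t le_rfl ht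
      simpa using this
    exact hh.mono _ _ (hnn t ht htδ) hu0 hle' i
  constructor
  · rintro ⟨δ, hδ, H⟩
    by_contra hcon
    push_neg at hcon
    obtain ⟨hcf, hcg⟩ := hcon
    unfold LowerLoc at hcf hcg
    push_neg at hcf hcg
    have hδ' : 0 < min δ δ0 := lt_min hδ hδ0
    obtain ⟨tf, htf0, htf1, htf2⟩ := hcf (min δ δ0) hδ'
    obtain ⟨tg, htg0, htg1, htg2⟩ := hcg (min δ δ0) hδ'
    set t := min tf tg with htdef
    have ht0 : 0 < t := lt_min htf0 htg0
    have htf : t ≤ tf := min_le_left _ _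
    have htg : t ≤ tg := min_le_right _ _
    have htfδ0 : tf ≤ δ0 := le_of_lt (lt_of_lt_of_le htf1 (min_le_right _ _))
    have htgδ0 : tg ≤ δ0 := le_of_lt (lt_of_lt_of_le htg1 (min_le_right _ _))
    have htδ : t < δ := lt_of_le_of_lt htf (lt_of_lt_of_le htf1 (min_le_left _ _))
    have h1 : f u i ≤ f (u - t • e) i :=
      le_trans htf2 (hf.mono _ _ (hnn tf htf0.le htfδ0) (hnn t ht0.le (htf.trans htfδ0))
        (hle t tf ht0.le htf) i)
    have h2 : g u i ≤ g (u - t • e) i :=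
      le_trans htg2 (hg.mono _ _ (hnn tg htg0.le htgδ0) (hnn t ht0.le (htg.trans htgδ0))
        (hle t tg ht0.le htg) i)
    have := H t ht0 htδ
    nlinarith
  · rintro (⟨δ, hδ, H⟩ | ⟨δ, hδ, H⟩)
    · refine ⟨min δ δ0, lt_min hδ hδ0, fun t ht htm => ?_⟩
      have hfs : f (u - t • e) i < f u i := H t ht (lt_of_lt_of_le htm (min_le_left _ _))
      have hgs : g (u - t • e) i ≤ g u i :=
        key g hg t ht.le (le_of_lt (lt_of_lt_of_le htm (min_le_right _ _)))
      nlinarith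
    · refine ⟨min δ δ0, lt_min hδ hδ0, fun t ht htm => ?_⟩
      have hgs : g (u - t • e) i < g u i := H t ht (lt_of_lt_of_le htm (min_le_left _ _))
      have hfs : f (u - t • e) i ≤ f u i :=
        key f hf t ht.le (le_of_lt (lt_of_lt_of_le htm (min_le_right _ _)))
      nlinarith
end
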